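/- arXiv:1411.2894 — 10 statements merged into one kernel-verified Lean document; each statement's English description precedes it below -/
import Mathlib

section
/- Let i_L, v_C : ℝ → ℝ be differentiable functions satisfying L·i_L'(t) = v_S(t) − v_C(t) − R_L·i_L(t) and C·v_C'(t) = i_L(t) − v_C(t)/R_C for all t, where L, C, R_L, R_C > 0. Define P̃(i,v) = (R_C/2)·(v/R_C − i)² + ((R_L + R_C)/2)·i². Then for all t: −L·i_L'(t) + 2·R_C·C·v_C'(t) = (∂P̃/∂i)(i_L(t), v_C(t)) − v_S(t) and −C·v_C'(t) = (∂P̃/∂v)(i_L(t), v_C(t)), where ∂P̃/∂i = −(v − R_C·i) + (R_L + R_C)·i and ∂P̃/∂v = v/R_C − i. (That is, (Ã, P̃) with Ã = [[−L, 2R_C·C],[0, −C]] is an admissible pair reproducing the circuit dynamics.) -/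
theorem rlc_admissible_first_row {K : Type*} [Field K] {L C R_L R_C v_S i v di dv : K}
    (hR_C : R_C ≠ 0) (h_ind : L * di = v_S - v - R_L * i) (h_cap : C * dv = i - v / R_C) :
    -L * di + 2 * R_C * C * dv = (-(v - R_C * i) + (R_L + R_C) * i) - v_S := by
  have h_cap' : R_C * (C * dv) = R_C * i - v := by
    rw [h_cap, mul_sub, mul_div_cancel₀ _ hR_C]
  linear_combination (-1 : K) * h_ind + 2 * h_cap'

theorem rlc_admissible_pair_general (L C R_L R_C : ℝ) (v_S i_L v_C : ℝ → ℝ)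
    (hRC : 0 < R_C)
    (heq1 : ∀ t, L * deriv i_L t = v_S t - v_C t - R_L * i_L t)
    (heq2 : ∀ t, C * deriv v_C t = i_L t - v_C t / R_C) :
    ∀ t, (-L * deriv i_L t + 2 * R_C * C * deriv v_C t =
            (-(v_C t - R_C * i_L t) + (R_L + R_C) * i_L t) - v_S t)
       ∧ (-C * deriv v_C t = v_C t / R_C - i_L t) := fun t =>
  ⟨rlc_admissible_first_row hRC.ne' (heq1 t) (heq2 t), by rw [neg_mul, heq2 t, neg_sub]⟩

/-- The Brayton–Moser admissible pair `(Ã, P̃)` with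
`Ã = [[−L, 2R_C·C],[0, −C]]` and
`P̃(i,v) = (R_C/2)(v/R_C − i)² + ((R_L+R_C)/2) i²` reproduces the RLC circuit
dynamics: `−L·i_L' + 2R_C·C·v_C' = ∂P̃/∂i − v_S` and `−C·v_C' = ∂P̃/∂v`,
where `∂P̃/∂i = −(v − R_C i) + (R_L + R_C) i` and `∂P̃/∂v = v/R_C − i`. -/
theorem rlc_admissible_pair (L C R_L R_C : ℝ) (v_S i_L v_C : ℝ → ℝ)
    (hL : 0 < L) (hC : 0 < C) (hRL : 0 < R_L) (hRC : 0 < R_C)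
    (hiL : Differentiable ℝ i_L) (hvC : Differentiable ℝ v_C)
    (heq1 : ∀ t, L * deriv i_L t = v_S t - v_C t - R_L * i_L t)
    (heq2 : ∀ t, C * deriv v_C t = i_L t - v_C t / R_C) :
    ∀ t, (-L * deriv i_L t + 2 * R_C * C * deriv v_C t =
            (-(v_C t - R_C * i_L t) + (R_L + R_C) * i_L t) - v_S t)
       ∧ (-C * deriv v_C t = v_C t / R_C - i_L t) :=
  rlc_admissible_pair_general L C R_L R_C v_S i_L v_C hRC heq1 heq2
end

section
/- Let i_L, v_C : ℝ → ℝ be differentiable and satisfy L·i_L'(t) = v_S(t) − v_C(t) − R_L·i_L(t) and C·v_C'(t) = i_L(t) − v_C(t)/R_C for all t, where L, C, R_L, R_C > 0 and L ≥ R_C²·C. Define P̃(i,v) = (R_C/2)·(v/R_C − i)² + ((R_L + R_C)/2)·i². Then for all t, the derivative of t ↦ P̃(i_L(t), v_C(t)) satisfies (d/dt) P̃(i_L(t), v_C(t)) ≤ v_S(t)·i_L'(t); i.e., the circuit is passive with storage function P̃ and port variables the source voltage and the time-derivative of the inductor current. -/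
/-!
Along a trajectory, write `x = v_C / R_C - i_L`. The capacitor equation gives `v_C' = -x / C`, and
eliminating `v_S` with the inductor equation turns the supply rate minus the storage rate into the
quadratic form `L i_L'² + 2 R_C x i_L' + x² / C`, which equals
`(L - R_C² C) i_L'² + (x + R_C C i_L')² / C` and is therefore nonnegative when `L ≥ R_C² C`.
-/

theorem HasDerivAt.shaped_mixed_potential {i v : ℝ → ℝ} {i' v' : ℝ} (a b t : ℝ)
    (hi : HasDerivAt i i' t) (hv : HasDerivAt v v' t) :
    HasDerivAt (fun τ => a / 2 * (v τ / a - i τ) ^ 2 + b / 2 * i τ ^ 2)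
      (a * (v t / a - i t) * (v' / a - i') + b * i t * i') t := by
  have hx : HasDerivAt (fun τ => v τ / a - i τ) (v' / a - i') t := (hv.div_const a).sub hi
  exact (((hx.pow 2).const_mul (a / 2)).add ((hi.pow 2).const_mul (b / 2))).congr_deriv
    (by push_cast; ring)

theorem rlc_supply_sub_storage_rate {L C R_L R_C i v i' v' vS : ℝ} (hC : C ≠ 0) (hRC : R_C ≠ 0)
    (hind : L * i' = vS - v - R_L * i) (hcap : C * v' = i - v / R_C) :
    vS * i' - (R_C * (v / R_C - i) * (v' / R_C - i') + (R_L + R_C) * i * i')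
      = (L - R_C ^ 2 * C) * i' ^ 2 + (v / R_C - i + R_C * C * i') ^ 2 / C := by
  have hv' : v' = (i - v / R_C) / C := by rw [← hcap]; field_simp
  have hvS : vS = L * i' + v + R_L * i := by linarith
  subst hv' hvS
  field_simp
  ring

theorem rlc_passivity_general (L C R_L R_C : ℝ) (v_S i_L v_C : ℝ → ℝ)
    (hC : 0 < C) (hRC : 0 < R_C)
    (hLC : L ≥ R_C ^ 2 * C)
    (hiL : Differentiable ℝ i_L) (hvC : Differentiable ℝ v_C)
    (heq1 : ∀ t, L * deriv i_L t = v_S t - v_C t - R_L * i_L t)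
    (heq2 : ∀ t, C * deriv v_C t = i_L t - v_C t / R_C) :
    ∀ t, deriv (fun τ => R_C / 2 * (v_C τ / R_C - i_L τ) ^ 2
            + (R_L + R_C) / 2 * (i_L τ) ^ 2) t
          ≤ v_S t * deriv i_L t := by
  intro t
  rw [((hiL t).hasDerivAt.shaped_mixed_potential R_C (R_L + R_C) t (hvC t).hasDerivAt).deriv,
    ← sub_nonneg, rlc_supply_sub_storage_rate hC.ne' hRC.ne' (heq1 t) (heq2 t)]
  have hLC' : 0 ≤ L - R_C ^ 2 * C := sub_nonneg.mpr hLC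
  positivity

/-- With `L ≥ R_C²·C`, the RLC circuit is passive with storage
function `P̃(i,v) = (R_C/2)(v/R_C − i)² + ((R_L+R_C)/2) i²` and port variables
the source voltage and the time-derivative of the inductor current:
`(d/dt) P̃(i_L(t), v_C(t)) ≤ v_S(t)·i_L'(t)`. -/
theorem rlc_passivity (L C R_L R_C : ℝ) (v_S i_L v_C : ℝ → ℝ)
    (hL : 0 < L) (hC : 0 < C) (hRL : 0 < R_L) (hRC : 0 < R_C)
    (hLC : L ≥ R_C ^ 2 * C)
    (hiL : Differentiable ℝ i_L) (hvC : Differentiable ℝ v_C)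
    (heq1 : ∀ t, L * deriv i_L t = v_S t - v_C t - R_L * i_L t)
    (heq2 : ∀ t, C * deriv v_C t = i_L t - v_C t / R_C) :
    ∀ t, deriv (fun τ => R_C / 2 * (v_C τ / R_C - i_L τ) ^ 2
            + (R_L + R_C) / 2 * (i_L τ) ^ 2) t
          ≤ v_S t * deriv i_L t :=
  rlc_passivity_general L C R_L R_C v_S i_L v_C hC hRC hLC hiL hvC heq1 heq2
end

section
/- Let L, C, R_L, R_C > 0 with L ≥ R_C²·C, let K ≥ 0, let i_L* ∈ ℝ, and suppose i_L, v_C : ℝ → ℝ are differentiable and satisfy the closed-loop equations L·i_L'(t) = v_S(t) − v_C(t) − R_L·i_L(t) and C·v_C'(t) = i_L(t) − v_C(t)/R_C with the feedback v_S(t) = −K·(i_L(t) − i_L*) + (R_L + R_C)·i_L*. Define P̃_d(i,v) = (R_C/2)·(v/R_C − i)² + ((R_L + R_C + K)/2)·(i − i_L*)². Then for all t, (d/dt) P̃_d(i_L(t), v_C(t)) ≤ 0. -/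
/-!
Write `S = R_L + R_C + K`, `a = v/R_C - i` and `b = i - i_L*`. Then `∇P̃_d = (S b - R_C a, a)`, while
the feedback turns the circuit equations into `L i' = -(S b + R_C a)` and `C v' = -a`. Hence
`dP̃_d/dt = -(1/C - R_C²/L) a² - S² b²/L`, which is nonpositive as soon as `L ≥ R_C² C`.
-/

noncomputable def shapedPotential (R_C S iLs i v : ℝ) : ℝ :=
  R_C / 2 * (v / R_C - i) ^ 2 + S / 2 * (i - iLs) ^ 2

theorem hasDerivAt_shapedPotential {R_C : ℝ} (S iLs : ℝ) {i v : ℝ → ℝ} {di dv t : ℝ}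
    (hRC : R_C ≠ 0) (hi : HasDerivAt i di t) (hv : HasDerivAt v dv t) :
    HasDerivAt (fun τ => shapedPotential R_C S iLs (i τ) (v τ))
      ((v t / R_C - i t) * dv + (S * (i t - iLs) - R_C * (v t / R_C - i t)) * di) t := by
  have ha : HasDerivAt (fun τ => v τ / R_C - i τ) (dv / R_C - di) t := (hv.div_const R_C).sub hi
  have hb : HasDerivAt (fun τ => i τ - iLs) di t := hi.sub_const iLs
  refine (((ha.fun_pow 2).const_mul (R_C / 2)).fun_add
    ((hb.fun_pow 2).const_mul (S / 2))).congr_deriv ?_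
  norm_num
  field_simp
  ring

theorem closedLoop_inductor_eq {L R_L R_C K iLs i v vS di : ℝ} (hRC : R_C ≠ 0)
    (h : L * di = vS - v - R_L * i) (hfb : vS = -K * (i - iLs) + (R_L + R_C) * iLs) :
    L * di = -((R_L + R_C + K) * (i - iLs) + R_C * (v / R_C - i)) := by
  rw [h, hfb]
  field_simp
  ring

theorem shapedPotential_rate_eq {L C R_C S a b di dv : ℝ} (hL : L ≠ 0) (hC : C ≠ 0)
    (hdi : L * di = -(S * b + R_C * a)) (hdv : C * dv = -a) :
    a * dv + (S * b - R_C * a) * di = -(1 / C - R_C ^ 2 / L) * a ^ 2 - S ^ 2 * b ^ 2 / L := by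
  linear_combination (norm := skip) a / C * hdv + (S * b - R_C * a) / L * hdi
  field_simp
  ring

theorem shapedPotential_rate_nonpos {L C R_C S a b : ℝ} (hL : 0 < L) (hC : 0 < C)
    (hLC : L ≥ R_C ^ 2 * C) :
    -(1 / C - R_C ^ 2 / L) * a ^ 2 - S ^ 2 * b ^ 2 / L ≤ 0 := by
  have hgap : 0 ≤ 1 / C - R_C ^ 2 / L := by
    rw [sub_nonneg, div_le_div_iff₀ hL hC]
    linarith
  have hloss : 0 ≤ S ^ 2 * b ^ 2 / L := by positivity
  linarith [mul_nonneg hgap (sq_nonneg a)]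

theorem rlc_power_shaping_closed_loop_general (L C R_L R_C K iLs : ℝ)
    (v_S i_L v_C : ℝ → ℝ)
    (hL : 0 < L) (hC : 0 < C) (hRC : 0 < R_C)
    (hLC : L ≥ R_C ^ 2 * C)
    (hiL : Differentiable ℝ i_L) (hvC : Differentiable ℝ v_C)
    (heq1 : ∀ t, L * deriv i_L t = v_S t - v_C t - R_L * i_L t)
    (heq2 : ∀ t, C * deriv v_C t = i_L t - v_C t / R_C)
    (hfb : ∀ t, v_S t = -K * (i_L t - iLs) + (R_L + R_C) * iLs) :
    ∀ t, deriv (fun τ => R_C / 2 * (v_C τ / R_C - i_L τ) ^ 2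
            + (R_L + R_C + K) / 2 * (i_L τ - iLs) ^ 2) t ≤ 0 := by
  intro t
  have hdi := closedLoop_inductor_eq hRC.ne' (heq1 t) (hfb t)
  have hdv : C * deriv v_C t = -(v_C t / R_C - i_L t) := by rw [heq2]; ring
  have hP := hasDerivAt_shapedPotential (R_L + R_C + K) iLs hRC.ne'
    (hiL t).hasDerivAt (hvC t).hasDerivAt
  refine hP.deriv.trans_le ?_
  rw [shapedPotential_rate_eq hL.ne' hC.ne' hdi hdv]
  exact shapedPotential_rate_nonpos hL hC hLC

/-- Under the power-shaping feedback
`v_S = −K(i_L − i_L*) + (R_L + R_C) i_L*` (gain `K ≥ 0`), and with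
`L ≥ R_C²·C`, the shaped closed-loop potential
`P̃_d(i,v) = (R_C/2)(v/R_C − i)² + ((R_L+R_C+K)/2)(i − i_L*)²` is
nonincreasing along the closed-loop trajectories. -/
theorem rlc_power_shaping_closed_loop (L C R_L R_C K iLs : ℝ)
    (v_S i_L v_C : ℝ → ℝ)
    (hL : 0 < L) (hC : 0 < C) (hRL : 0 < R_L) (hRC : 0 < R_C)
    (hLC : L ≥ R_C ^ 2 * C) (hK : 0 ≤ K)
    (hiL : Differentiable ℝ i_L) (hvC : Differentiable ℝ v_C)
    (heq1 : ∀ t, L * deriv i_L t = v_S t - v_C t - R_L * i_L t)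
    (heq2 : ∀ t, C * deriv v_C t = i_L t - v_C t / R_C)
    (hfb : ∀ t, v_S t = -K * (i_L t - iLs) + (R_L + R_C) * iLs) :
    ∀ t, deriv (fun τ => R_C / 2 * (v_C τ / R_C - i_L τ) ^ 2
            + (R_L + R_C + K) / 2 * (i_L τ - iLs) ^ 2) t ≤ 0 :=
  rlc_power_shaping_closed_loop_general L C R_L R_C K iLs v_S i_L v_C hL hC hRC hLC hiL hvC heq1
    heq2 hfb
end

section
/- Let i, v : [0,1] × ℝ → ℝ be twice continuously differentiable and satisfy the telegrapher's equations L·∂i/∂t = −∂v/∂z − R·i and C·∂v/∂t = −∂i/∂z − G·v on [0,1] × ℝ, with constants L, C, R, G > 0. Define the mixed potential P(t) = ∫₀¹ ( −(∂v/∂z)·i + (G/2)·v² − (R/2)·i² ) dz. Then for all t: dP/dt = ∫₀¹ ( L·(∂i/∂t)² − C·(∂v/∂t)² ) dz − [ i(1,t)·(∂v/∂t)(1,t) − i(0,t)·(∂v/∂t)(0,t) ]. In particular, if i(0,t) = i(1,t) = 0 for all t (zero boundary energy flow), then dP/dt = ∫₀¹ ( L·(∂i/∂t)² − C·(∂v/∂t)²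 ) dz, which is not sign definite. -/
/-!
Differentiate under the integral sign. In the time derivative of the density, the telegrapher's
equations replace `-∂v/∂z` by `L ∂i/∂t + R i` and `G v` by `-∂i/∂z - C ∂v/∂t`; the resistive and
conductive terms cancel, and by equality of mixed partials the remaining cross terms
`∂i/∂z · ∂v/∂t + i · ∂²v/∂z∂t` form the exact derivative `∂/∂z (i · ∂v/∂t)`, which integrates to the
boundary term.
-/

open Function Set

noncomputable def partialFst (f : ℝ → ℝ → ℝ) (z t : ℝ) : ℝ := deriv (fun w => f w t) z

noncomputable def partialSnd (f : ℝ → ℝ → ℝ) (z t : ℝ) : ℝ := deriv (f z) t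

section Partials

variable {f : ℝ → ℝ → ℝ}

theorem hasDerivAt_fst_of_hasFDerivAt_uncurry {f' : ℝ × ℝ →L[ℝ] ℝ} {z t : ℝ}
    (hf : HasFDerivAt (uncurry f) f' (z, t)) : HasDerivAt (f · t) (f' (1, 0)) z :=
  hf.comp_hasDerivAt (f := fun w => (w, t)) z ((hasDerivAt_id z).prodMk (hasDerivAt_const z t))

theorem hasDerivAt_snd_of_hasFDerivAt_uncurry {f' : ℝ × ℝ →L[ℝ] ℝ} {z t : ℝ}
    (hf : HasFDerivAt (uncurry f) f' (z, t)) : HasDerivAt (f z) (f' (0, 1)) t :=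
  hf.comp_hasDerivAt (f := fun τ => (z, τ)) t ((hasDerivAt_const t z).prodMk (hasDerivAt_id t))

theorem uncurry_partialFst (hf : Differentiable ℝ (uncurry f)) :
    uncurry (partialFst f) = fun p => fderiv ℝ (uncurry f) p (1, 0) :=
  funext fun _ => (hasDerivAt_fst_of_hasFDerivAt_uncurry (hf _).hasFDerivAt).deriv

theorem uncurry_partialSnd (hf : Differentiable ℝ (uncurry f)) :
    uncurry (partialSnd f) = fun p => fderiv ℝ (uncurry f) p (0, 1) :=
  funext fun _ => (hasDerivAt_snd_of_hasFDerivAt_uncurry (hf _).hasFDerivAt).deriv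

theorem Differentiable.hasDerivAt_partialFst (hf : Differentiable ℝ (uncurry f)) (z t : ℝ) :
    HasDerivAt (f · t) (partialFst f z t) z :=
  (hasDerivAt_fst_of_hasFDerivAt_uncurry (hf _).hasFDerivAt).differentiableAt.hasDerivAt

theorem Differentiable.hasDerivAt_partialSnd (hf : Differentiable ℝ (uncurry f)) (z t : ℝ) :
    HasDerivAt (f z) (partialSnd f z t) t :=
  (hasDerivAt_snd_of_hasFDerivAt_uncurry (hf _).hasFDerivAt).differentiableAt.hasDerivAt

variable {n : WithTop ℕ∞}

theorem ContDiff.partialFst (hf : ContDiff ℝ (n + 1) (uncurry f)) :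
    ContDiff ℝ n (uncurry (partialFst f)) := by
  rw [uncurry_partialFst (hf.differentiable (by simp))]
  exact (hf.fderiv_right le_rfl).clm_apply contDiff_const

theorem ContDiff.partialSnd (hf : ContDiff ℝ (n + 1) (uncurry f)) :
    ContDiff ℝ n (uncurry (partialSnd f)) := by
  rw [uncurry_partialSnd (hf.differentiable (by simp))]
  exact (hf.fderiv_right le_rfl).clm_apply contDiff_const

theorem partialSnd_partialFst (hf : ContDiff ℝ 2 (uncurry f)) :
    partialSnd (partialFst f) = partialFst (partialSnd f) := by
  have hf' : Differentiable ℝ (fderiv ℝ (uncurry f)) :=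
    (hf.fderiv_right (m := 1) le_rfl).differentiable one_ne_zero
  have hsecond (p v w : ℝ × ℝ) :
      fderiv ℝ (fun q => fderiv ℝ (uncurry f) q w) p v = fderiv ℝ (fderiv ℝ (uncurry f)) p v w := by
    rw [fderiv_clm_apply (hf' p) (differentiableAt_const w)]
    simp
  have h1 : Differentiable ℝ (uncurry f) := hf.differentiable (by simp)
  have hFst : Differentiable ℝ (uncurry (partialFst f)) :=
    (ContDiff.partialFst (n := 1) hf).differentiable one_ne_zero
  have hSnd : Differentiable ℝ (uncurry (partialSnd f)) :=
    (ContDiff.partialSnd (n := 1) hf).differentiable one_ne_zero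
  funext z t
  calc partialSnd (partialFst f) z t
      = fderiv ℝ (uncurry (partialFst f)) (z, t) (0, 1) := congrFun (uncurry_partialSnd hFst) (z, t)
    _ = fderiv ℝ (fderiv ℝ (uncurry f)) (z, t) (0, 1) (1, 0) := by
        rw [uncurry_partialFst h1, hsecond]
    _ = fderiv ℝ (fderiv ℝ (uncurry f)) (z, t) (1, 0) (0, 1) :=
        (hf.contDiffAt.isSymmSndFDerivAt (by simp)).eq _ _
    _ = partialFst (partialSnd f) z t := by
        rw [← hsecond, ← uncurry_partialSnd h1]
        exact (congrFun (uncurry_partialFst hSnd) (z, t)).symm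

end Partials

theorem hasDerivAt_intervalIntegral_of_continuous {F F' : ℝ → ℝ → ℝ} {a b : ℝ}
    (hF : Continuous (uncurry F)) (hF' : Continuous (uncurry F'))
    (hderiv : ∀ z τ, HasDerivAt (F z) (F' z τ) τ) (t : ℝ) :
    HasDerivAt (fun τ => ∫ z in a..b, F z τ) (∫ z in a..b, F' z t) t := by
  obtain ⟨M, hM⟩ := (isCompact_uIcc.prod (isCompact_closedBall t 1)).exists_bound_of_continuousOn
    hF'.continuousOn
  refine (intervalIntegral.hasDerivAt_integral_of_dominated_loc_of_deriv_le (bound := fun _ => M)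
    (F := fun τ z => F z τ) (Metric.closedBall_mem_nhds t one_pos)
    (.of_forall fun τ => (hF.uncurry_right τ).aestronglyMeasurable)
    ((hF.uncurry_right t).intervalIntegrable a b) (hF'.uncurry_right t).aestronglyMeasurable
    (.of_forall fun z hz τ hτ => hM (z, τ) ⟨uIoc_subset_uIcc hz, hτ⟩) intervalIntegrable_const
    (.of_forall fun z _ τ _ => hderiv z τ)).2

noncomputable def mixedPotentialDensity (G R : ℝ) (i v : ℝ → ℝ → ℝ) (z τ : ℝ) : ℝ :=
  -partialFst v z τ * i z τ + G / 2 * v z τ ^ 2 - R / 2 * i z τ ^ 2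

theorem hasDerivAt_mixedPotentialDensity {G R : ℝ} {i v : ℝ → ℝ → ℝ}
    (hi : Differentiable ℝ (uncurry i)) (hv : ContDiff ℝ 2 (uncurry v)) (z t : ℝ) :
    HasDerivAt (mixedPotentialDensity G R i v z)
      (-partialSnd (partialFst v) z t * i z t - partialFst v z t * partialSnd i z t
        + G * v z t * partialSnd v z t - R * i z t * partialSnd i z t) t := by
  have hvz := ((hv.partialFst (n := 1)).differentiable one_ne_zero).hasDerivAt_partialSnd z t
  have hit := hi.hasDerivAt_partialSnd z t
  have hvt := (hv.differentiable two_ne_zero).hasDerivAt_partialSnd z t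
  refine (((hvz.neg.mul hit).add ((hvt.pow 2).const_mul (G / 2))).sub
    ((hit.pow 2).const_mul (R / 2))).congr_deriv ?_
  simp only [Pi.neg_apply]
  push_cast
  ring

theorem deriv_integral_mixedPotentialDensity {L C R G a b t : ℝ} {i v : ℝ → ℝ → ℝ}
    (hi : ContDiff ℝ 2 (uncurry i)) (hv : ContDiff ℝ 2 (uncurry v))
    (hcurrent : ∀ z ∈ uIcc a b, L * partialSnd i z t = -partialFst v z t - R * i z t)
    (hvoltage : ∀ z ∈ uIcc a b, C * partialSnd v z t = -partialFst i z t - G * v z t) :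
    deriv (fun τ => ∫ z in a..b, mixedPotentialDensity G R i v z τ) t
      = (∫ z in a..b, (L * partialSnd i z t ^ 2 - C * partialSnd v z t ^ 2))
        - (i b t * partialSnd v b t - i a t * partialSnd v a t) := by
  have hi' : Differentiable ℝ (uncurry i) := hi.differentiable two_ne_zero
  have hvt' : Differentiable ℝ (uncurry (partialSnd v)) :=
    (hv.partialSnd (n := 1)).differentiable one_ne_zero
  have ci : Continuous fun p : ℝ × ℝ => i p.1 p.2 := hi.continuous
  have cv : Continuous fun p : ℝ × ℝ => v p.1 p.2 := hv.continuous
  have ciz : Continuous fun p : ℝ × ℝ => partialFst i p.1 p.2 := (hi.partialFst (n := 1)).continuous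
  have cit : Continuous fun p : ℝ × ℝ => partialSnd i p.1 p.2 := (hi.partialSnd (n := 1)).continuous
  have cvz : Continuous fun p : ℝ × ℝ => partialFst v p.1 p.2 := (hv.partialFst (n := 1)).continuous
  have cvt : Continuous fun p : ℝ × ℝ => partialSnd v p.1 p.2 := hvt'.continuous
  have cvzt : Continuous fun p : ℝ × ℝ => partialSnd (partialFst v) p.1 p.2 :=
    ((hv.partialFst (n := 1)).partialSnd (n := 0)).continuous
  have hflux (z : ℝ) : HasDerivAt (fun w => i w t * partialSnd v w t)
      (partialFst i z t * partialSnd v z t + i z t * partialSnd (partialFst v) z t) z := by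
    rw [partialSnd_partialFst hv]
    exact (hi'.hasDerivAt_partialFst z t).mul (hvt'.hasDerivAt_partialFst z t)
  have hbalance : EqOn (fun z => -partialSnd (partialFst v) z t * i z t
        - partialFst v z t * partialSnd i z t + G * v z t * partialSnd v z t
        - R * i z t * partialSnd i z t)
      (fun z => (L * partialSnd i z t ^ 2 - C * partialSnd v z t ^ 2)
        - (partialFst i z t * partialSnd v z t + i z t * partialSnd (partialFst v) z t))
      (uIcc a b) := fun z hz => by
    linear_combination (-partialSnd i z t) * hcurrent z hz + partialSnd v z t * hvoltage z hz
  rw [(hasDerivAt_intervalIntegral_of_continuous (by unfold mixedPotentialDensity; fun_prop)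
      (by fun_prop) (hasDerivAt_mixedPotentialDensity hi' hv) t).deriv,
    intervalIntegral.integral_congr hbalance,
    intervalIntegral.integral_sub (Continuous.intervalIntegrable (by fun_prop) _ _)
      (Continuous.intervalIntegrable (by fun_prop) _ _),
    intervalIntegral.integral_eq_sub_of_hasDerivAt (fun z _ => hflux z)
      (Continuous.intervalIntegrable (by fun_prop) _ _)]

theorem transmission_line_mixed_potential_rate_general (L C R G : ℝ) (i v : ℝ → ℝ → ℝ)
    (hi : ContDiff ℝ 2 (Function.uncurry i)) (hv : ContDiff ℝ 2 (Function.uncurry v))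
    (heq1 : ∀ t : ℝ, ∀ z ∈ Set.Icc (0:ℝ) 1,
      L * deriv (i z) t = -(deriv (fun w => v w t) z) - R * i z t)
    (heq2 : ∀ t : ℝ, ∀ z ∈ Set.Icc (0:ℝ) 1,
      C * deriv (v z) t = -(deriv (fun w => i w t) z) - G * v z t) :
    (∀ t : ℝ,
      deriv (fun τ => ∫ z in (0:ℝ)..1,
          (-(deriv (fun w => v w τ) z) * i z τ
            + G / 2 * (v z τ) ^ 2 - R / 2 * (i z τ) ^ 2)) t
        = (∫ z in (0:ℝ)..1, (L * (deriv (i z) t) ^ 2 - C * (deriv (v z) t) ^ 2))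
          - (i 1 t * deriv (v 1) t - i 0 t * deriv (v 0) t))
    ∧ ((∀ t : ℝ, i 0 t = 0 ∧ i 1 t = 0) →
        ∀ t : ℝ,
          deriv (fun τ => ∫ z in (0:ℝ)..1,
              (-(deriv (fun w => v w τ) z) * i z τ
                + G / 2 * (v z τ) ^ 2 - R / 2 * (i z τ) ^ 2)) t
            = ∫ z in (0:ℝ)..1,
                (L * (deriv (i z) t) ^ 2 - C * (deriv (v z) t) ^ 2)) := by
  have hI : uIcc (0 : ℝ) 1 = Icc 0 1 := uIcc_of_le zero_le_one
  have hrate (t : ℝ) := deriv_integral_mixedPotentialDensity hi hv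
    (fun z hz => heq1 t z (hI ▸ hz)) (fun z hz => heq2 t z (hI ▸ hz))
  exact ⟨hrate, fun hb t => (hrate t).trans
    (by rw [(hb t).1, (hb t).2, zero_mul, zero_mul, sub_self, sub_zero]; rfl)⟩

/-- For the telegrapher's equations on `[0,1] × ℝ`, the mixed
potential `P(t) = ∫₀¹ (−(∂v/∂z)·i + (G/2)v² − (R/2)i²) dz` satisfies
`dP/dt = ∫₀¹ (L(∂i/∂t)² − C(∂v/∂t)²) dz − [i(1,t)(∂v/∂t)(1,t) − i(0,t)(∂v/∂t)(0,t)]`;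
in particular with zero boundary currents the boundary term vanishes. -/
theorem transmission_line_mixed_potential_rate (L C R G : ℝ) (i v : ℝ → ℝ → ℝ)
    (hL : 0 < L) (hC : 0 < C) (hR : 0 < R) (hG : 0 < G)
    (hi : ContDiff ℝ 2 (Function.uncurry i)) (hv : ContDiff ℝ 2 (Function.uncurry v))
    (heq1 : ∀ t : ℝ, ∀ z ∈ Set.Icc (0:ℝ) 1,
      L * deriv (i z) t = -(deriv (fun w => v w t) z) - R * i z t)
    (heq2 : ∀ t : ℝ, ∀ z ∈ Set.Icc (0:ℝ) 1,
      C * deriv (v z) t = -(deriv (fun w => i w t) z) - G * v z t) :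
    (∀ t : ℝ,
      deriv (fun τ => ∫ z in (0:ℝ)..1,
          (-(deriv (fun w => v w τ) z) * i z τ
            + G / 2 * (v z τ) ^ 2 - R / 2 * (i z τ) ^ 2)) t
        = (∫ z in (0:ℝ)..1, (L * (deriv (i z) t) ^ 2 - C * (deriv (v z) t) ^ 2))
          - (i 1 t * deriv (v 1) t - i 0 t * deriv (v 0) t))
    ∧ ((∀ t : ℝ, i 0 t = 0 ∧ i 1 t = 0) →
        ∀ t : ℝ,
          deriv (fun τ => ∫ z in (0:ℝ)..1,
              (-(deriv (fun w => v w τ) z) * i z τ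
                + G / 2 * (v z τ) ^ 2 - R / 2 * (i z τ) ^ 2)) t
            = ∫ z in (0:ℝ)..1,
                (L * (deriv (i z) t) ^ 2 - C * (deriv (v z) t) ^ 2)) :=
  transmission_line_mixed_potential_rate_general L C R G i v hi hv heq1 heq2
end

section
/- Let R, G > 0 and let i : [0,1] → ℝ be continuously differentiable and v : [0,1] → ℝ be continuous. Define P̃(i,v) = ∫₀¹ ( (R/2)·i² + (G/2)·v² + v·i′ + (1/G)·(i′)² ) dz. Then P̃(i,v) = ∫₀¹ (1/(2G))·(i′ + G·v)² dz + ∫₀¹ (1/(2G))·(i′)² dz + ∫₀¹ (R/2)·i² dz; consequently P̃(i,v) ≥ 0, and P̃(i,v) = 0 if and only if i ≡ 0 and v ≡ 0 on [0,1]. -/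
/-!
Completing the square, `v·i′ + (G/2)v² = (1/(2G))(i′ + Gv)² - (1/(2G))(i′)²`, turns the
density of `P̃` into a sum of three squares with positive weights. Hence `P̃ ≥ 0`, and since the
density is continuous, `P̃ = 0` forces every square to vanish on `[0,1]`: `i = 0`, `i′ = 0` and
then `v = 0`. Conversely `i ≡ 0` on `[0,1]` gives `i′ ≡ 0` there (in the interior by locality of
the derivative, at the endpoints by continuity of `i′`).
-/

open Set intervalIntegral

/-- The integrand of `P̃` at a point where `i = a`, `v = b` and `i′ = d`. -/
noncomputable def shapedDensity (R G a b d : ℝ) : ℝ :=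
  R / 2 * a ^ 2 + G / 2 * b ^ 2 + b * d + 1 / G * d ^ 2

section shapedDensity

variable {R G : ℝ} (a b d : ℝ)

theorem shapedDensity_eq_sum_sq (hG : G ≠ 0) :
    shapedDensity R G a b d
      = 1 / (2 * G) * (d + G * b) ^ 2 + 1 / (2 * G) * d ^ 2 + R / 2 * a ^ 2 := by
  unfold shapedDensity
  field_simp
  ring

theorem shapedDensity_nonneg (hR : 0 ≤ R) (hG : 0 < G) : 0 ≤ shapedDensity R G a b d := by
  rw [shapedDensity_eq_sum_sq a b d hG.ne']
  positivity

theorem shapedDensity_eq_zero_iff (hR : 0 < R) (hG : 0 < G) :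
    shapedDensity R G a b d = 0 ↔ a = 0 ∧ b = 0 ∧ d = 0 := by
  refine ⟨fun h => ?_, fun ⟨ha, hb, hd⟩ => by simp [shapedDensity, ha, hb, hd]⟩
  rw [shapedDensity_eq_sum_sq a b d hG.ne'] at h
  obtain ⟨h₁₂, hsq₃⟩ := (add_eq_zero_iff_of_nonneg (by positivity) (by positivity)).mp h
  obtain ⟨hsq₁, hsq₂⟩ := (add_eq_zero_iff_of_nonneg (by positivity) (by positivity)).mp h₁₂
  have hd : d = 0 := by simpa [hG.ne'] using hsq₂
  have ha : a = 0 := by simpa [hR.ne'] using hsq₃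
  have hb : b = 0 := by simpa [hG.ne', hd] using hsq₁
  exact ⟨ha, hb, hd⟩

end shapedDensity

theorem intervalIntegral_eq_zero_iff_of_continuousOn_of_nonneg {f : ℝ → ℝ} {a b : ℝ}
    (hab : a < b) (hf : ContinuousOn f (Icc a b)) (hnn : ∀ x ∈ Icc a b, 0 ≤ f x) :
    ∫ x in a..b, f x = 0 ↔ ∀ x ∈ Icc a b, f x = 0 := by
  refine ⟨fun h c hc => ?_, fun h => ?_⟩
  · by_contra hne
    exact (integral_pos hab hf (fun x hx => hnn x (Ioc_subset_Icc_self hx))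
      ⟨c, hc, (hnn c hc).lt_of_ne' hne⟩).ne' h
  · rw [integral_congr (g := fun _ => 0) (by rwa [uIcc_of_le hab.le]), integral_zero]

theorem eqOn_deriv_zero_of_eqOn_zero {f : ℝ → ℝ} {a b : ℝ} (hab : a < b)
    (hf' : ContinuousOn (deriv f) (Icc a b)) (h : EqOn f 0 (Icc a b)) :
    EqOn (deriv f) 0 (Icc a b) := by
  have hIoo : EqOn (deriv f) 0 (Ioo a b) := fun x hx => by
    have hloc : f =ᶠ[nhds x] fun _ => 0 :=
      Filter.mem_of_superset (isOpen_Ioo.mem_nhds hx) fun y hy => h (Ioo_subset_Icc_self hy)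
    simp [hloc.deriv_eq]
  exact hIoo.of_subset_closure hf' continuousOn_const Ioo_subset_Icc_self
    (closure_Ioo hab.ne).superset

/-- The shaped mixed potential
`P̃(i,v) = ∫₀¹ ((R/2)i² + (G/2)v² + v·i′ + (1/G)(i′)²) dz` decomposes as a sum
of squares, is nonnegative, and vanishes iff `i ≡ 0` and `v ≡ 0` on `[0,1]`. -/
theorem shaped_potential_sum_of_squares (R G : ℝ) (hR : 0 < R) (hG : 0 < G)
    (i v : ℝ → ℝ) (hi : ContDiff ℝ 1 i) (hv : Continuous v) :
    ((∫ z in (0:ℝ)..1,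
        (R / 2 * (i z) ^ 2 + G / 2 * (v z) ^ 2 + v z * deriv i z
          + 1 / G * (deriv i z) ^ 2))
      = (∫ z in (0:ℝ)..1, 1 / (2 * G) * (deriv i z + G * v z) ^ 2)
        + (∫ z in (0:ℝ)..1, 1 / (2 * G) * (deriv i z) ^ 2)
        + (∫ z in (0:ℝ)..1, R / 2 * (i z) ^ 2))
    ∧ (0 ≤ ∫ z in (0:ℝ)..1,
        (R / 2 * (i z) ^ 2 + G / 2 * (v z) ^ 2 + v z * deriv i z
          + 1 / G * (deriv i z) ^ 2))
    ∧ ((∫ z in (0:ℝ)..1,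
        (R / 2 * (i z) ^ 2 + G / 2 * (v z) ^ 2 + v z * deriv i z
          + 1 / G * (deriv i z) ^ 2)) = 0
        ↔ ∀ z ∈ Set.Icc (0:ℝ) 1, i z = 0 ∧ v z = 0) := by
  have hi' : Continuous (deriv i) := hi.continuous_deriv le_rfl
  have hic : Continuous i := hi.continuous
  have hnn (z : ℝ) : 0 ≤ shapedDensity R G (i z) (v z) (deriv i z) :=
    shapedDensity_nonneg _ _ _ hR.le hG
  have hcont : Continuous fun z => shapedDensity R G (i z) (v z) (deriv i z) := by
    unfold shapedDensity; fun_prop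
  have hint {f : ℝ → ℝ} (hf : Continuous f) : IntervalIntegrable f MeasureTheory.volume 0 1 :=
    hf.intervalIntegrable 0 1
  refine ⟨?_, integral_nonneg zero_le_one fun z _ => hnn z, ?_⟩
  · rw [← integral_add (hint (by fun_prop)) (hint (by fun_prop)),
      ← integral_add (hint (by fun_prop)) (hint (by fun_prop))]
    exact integral_congr fun z _ => shapedDensity_eq_sum_sq _ _ _ hG.ne'
  · change ∫ z in (0:ℝ)..1, shapedDensity R G (i z) (v z) (deriv i z) = 0 ↔ _
    rw [intervalIntegral_eq_zero_iff_of_continuousOn_of_nonneg zero_lt_one hcont.continuousOn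
      fun z _ => hnn z]
    refine ⟨fun h z hz => ?_, fun h z hz => ?_⟩
    · obtain ⟨hiz, hvz, -⟩ := (shapedDensity_eq_zero_iff _ _ _ hR hG).mp (h z hz)
      exact ⟨hiz, hvz⟩
    · have hi'z := eqOn_deriv_zero_of_eqOn_zero zero_lt_one hi'.continuousOn
        (fun z hz => (h z hz).1) hz
      exact (shapedDensity_eq_zero_iff _ _ _ hR hG).mpr ⟨(h z hz).1, (h z hz).2, hi'z⟩
end

section
/- Let G, R > 0 and let i, v : [0,1] → ℝ be continuously differentiable with i(1)·v(1) = i(0)·v(0) (zero boundary energy-flow product). Define P(i,v) = ∫₀¹ ( −v′·i + (G/2)·v² − (R/2)·i² ) dz and P̃(i,v) = ∫₀¹ ( (R/2)·i² + (G/2)·v² + v·i′ + (1/G)·(i′)² ) dz. Then P̃(i,v) = −P(i,v) + (1/G)·∫₀¹ (G·v + i′)² dz; i.e., P̃ is obtained from P by the construction P̃ = λ·P + (1/2)∫₀¹ δP·K·δP dz with λ = −1 and K = diag(0, 2/G), where δ_v P = G·v + i′. -/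
open intervalIntegral

/-- The two potentials differ pointwise by `(1/G)(G v + i')²` up to the exact derivative
`(i v)' = i' v + i v'`; here `a, b, a', b'` stand for `i, v, i', v'`. -/
theorem shaped_density_eq {G : ℝ} (hG : G ≠ 0) (R a b a' b' : ℝ) :
    R / 2 * a ^ 2 + G / 2 * b ^ 2 + b * a' + 1 / G * a' ^ 2
      = -(-b' * a + G / 2 * b ^ 2 - R / 2 * a ^ 2) + 1 / G * (G * b + a') ^ 2
        - (a' * b + a * b') := by
  field_simp
  ring

theorem ContDiff.integral_deriv_mul_add_mul_deriv {u v : ℝ → ℝ} (hu : ContDiff ℝ 1 u)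
    (hv : ContDiff ℝ 1 v) (a b : ℝ) :
    ∫ x in a..b, deriv u x * v x + u x * deriv v x = u b * v b - u a * v a :=
  integral_deriv_mul_eq_sub
    (fun x _ ↦ (hu.differentiable one_ne_zero x).hasDerivAt)
    (fun x _ ↦ (hv.differentiable one_ne_zero x).hasDerivAt)
    ((hu.continuous_deriv le_rfl).intervalIntegrable a b)
    ((hv.continuous_deriv le_rfl).intervalIntegrable a b)

theorem shaped_potential_from_mixed_potential_general (G R : ℝ) (hG : 0 < G)
    (i v : ℝ → ℝ) (hi : ContDiff ℝ 1 i) (hv : ContDiff ℝ 1 v)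
    (hbd : i 1 * v 1 = i 0 * v 0) :
    (∫ z in (0:ℝ)..1,
        (R / 2 * (i z) ^ 2 + G / 2 * (v z) ^ 2 + v z * deriv i z
          + 1 / G * (deriv i z) ^ 2))
      = -(∫ z in (0:ℝ)..1,
            (-(deriv v z) * i z + G / 2 * (v z) ^ 2 - R / 2 * (i z) ^ 2))
        + 1 / G * ∫ z in (0:ℝ)..1, (G * v z + deriv i z) ^ 2 := by
  have hboundary := hi.integral_deriv_mul_add_mul_deriv hv 0 1
  rw [hbd, sub_self] at hboundary
  have : Continuous i := hi.continuous
  have : Continuous v := hv.continuous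
  have : Continuous (deriv i) := hi.continuous_deriv le_rfl
  have : Continuous (deriv v) := hv.continuous_deriv le_rfl
  rw [integral_congr fun z _ ↦ shaped_density_eq hG.ne' R (i z) (v z) (deriv i z) (deriv v z),
    integral_sub, integral_add, integral_neg, integral_const_mul, hboundary, sub_zero]
  all_goals exact Continuous.intervalIntegrable (by fun_prop) _ _

/-- With zero boundary energy-flow product `i(1)v(1) = i(0)v(0)`,
the shaped potential `P̃` is obtained from the Brayton–Moser potential `P` by
`P̃ = −P + (1/G)∫₀¹ (G·v + i′)² dz` (the construction `λ = −1`,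
`K = diag(0, 2/G)`, `δ_v P = G·v + i′`). -/
theorem shaped_potential_from_mixed_potential (G R : ℝ) (hG : 0 < G) (hR : 0 < R)
    (i v : ℝ → ℝ) (hi : ContDiff ℝ 1 i) (hv : ContDiff ℝ 1 v)
    (hbd : i 1 * v 1 = i 0 * v 0) :
    (∫ z in (0:ℝ)..1,
        (R / 2 * (i z) ^ 2 + G / 2 * (v z) ^ 2 + v z * deriv i z
          + 1 / G * (deriv i z) ^ 2))
      = -(∫ z in (0:ℝ)..1,
            (-(deriv v z) * i z + G / 2 * (v z) ^ 2 - R / 2 * (i z) ^ 2))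
        + 1 / G * ∫ z in (0:ℝ)..1, (G * v z + deriv i z) ^ 2 :=
  shaped_potential_from_mixed_potential_general G R hG i v hi hv hbd
end

section
/- Let i, v : [0,1] × ℝ → ℝ be twice continuously differentiable and satisfy the telegrapher's equations L·∂i/∂t = −∂v/∂z − R·i and C·∂v/∂t = −∂i/∂z − G·v on [0,1] × ℝ, with constants L, C, R, G > 0. Then for all (z,t): −L·(∂i/∂t)(z,t) + (2C/G)·(∂²v/∂z∂t)(z,t) = R·i(z,t) − (∂v/∂z)(z,t) − (2/G)·(∂²i/∂z²)(z,t), and −C·(∂v/∂t)(z,t) = G·v(z,t) + (∂i/∂z)(z,t). (That is, the pair (Ã, P̃) with Ã = [[−L, (2C/G)·∂/∂z],[0, −C]] is an admissible pair: Ã·∂u/∂t equals the variational derivative of P̃.) -/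
/-!
The second identity is the shunt equation `C ∂ₜv = -∂_z i - G v` rearranged. Differentiating
it in `z` gives `C ∂_z∂ₜv = -∂_z² i - G ∂_z v` (at the endpoints of `[0,1]` by continuity of the
second derivatives). Substituting this into `(2C/G) ∂_z∂ₜv`, and the series equation
`L ∂ₜi = -∂_z v - R i` into `-L ∂ₜi`, yields the first identity.
-/

open Set

theorem Set.EqOn.deriv_Icc {E : Type*} [NormedAddCommGroup E] [NormedSpace ℝ E]
    {f g : ℝ → E} {a b : ℝ} (hab : a ≠ b) (hfg : EqOn f g (Icc a b))
    (hf : Continuous (_root_.deriv f)) (hg : Continuous (_root_.deriv g)) :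
    EqOn (_root_.deriv f) (_root_.deriv g) (Icc a b) := by
  have hIoo : EqOn (_root_.deriv f) (_root_.deriv g) (Ioo a b) :=
    (hfg.mono Ioo_subset_Icc_self).deriv isOpen_Ioo
  simpa only [closure_Ioo hab] using hIoo.closure hf hg

theorem contDiff_deriv_slice_snd {𝕜 E : Type*} [NontriviallyNormedField 𝕜]
    [NormedAddCommGroup E] [NormedSpace 𝕜 E] {n : WithTop ℕ∞} {f : 𝕜 → 𝕜 → E}
    (hf : ContDiff 𝕜 (n + 1) (Function.uncurry f)) (t : 𝕜) :
    ContDiff 𝕜 n fun x => deriv (f x) t :=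
  hf.fderiv_apply contDiff_const contDiff_const le_rfl

theorem contDiff_slice_fst {𝕜 E : Type*} [NontriviallyNormedField 𝕜]
    [NormedAddCommGroup E] [NormedSpace 𝕜 E] {n : WithTop ℕ∞} {f : 𝕜 → 𝕜 → E}
    (hf : ContDiff 𝕜 n (Function.uncurry f)) (t : 𝕜) :
    ContDiff 𝕜 n fun x => f x t :=
  hf.comp (contDiff_id.prodMk contDiff_const)

theorem telegrapher_shunt_equation_deriv_space {C G : ℝ} {i v : ℝ → ℝ → ℝ}
    (hi : ContDiff ℝ 2 (Function.uncurry i)) (hv : ContDiff ℝ 2 (Function.uncurry v))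
    (heq : ∀ t : ℝ, ∀ z ∈ Icc (0:ℝ) 1,
      C * deriv (v z) t = -(deriv (fun w => i w t) z) - G * v z t)
    (t : ℝ) {z : ℝ} (hz : z ∈ Icc (0:ℝ) 1) :
    C * deriv (fun w => deriv (v w) t) z
      = -(deriv (fun w => deriv (fun w' => i w' t) w) z) - G * deriv (fun w => v w t) z := by
  have hvt : ContDiff ℝ 1 fun w => deriv (v w) t := contDiff_deriv_slice_snd hv t
  have hiz : ContDiff ℝ 1 fun w => deriv (fun w' => i w' t) w :=
    (contDiff_slice_fst hi t).deriv'
  have hvz : ContDiff ℝ 2 fun w => v w t := contDiff_slice_fst hv t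
  have hlhs : ContDiff ℝ 1 fun w => C * deriv (v w) t := contDiff_const.mul hvt
  have hrhs : ContDiff ℝ 1 fun w => -(deriv (fun w' => i w' t) w) - G * v w t :=
    hiz.neg.sub (contDiff_const.mul (hvz.of_le (by norm_num)))
  have h := Set.EqOn.deriv_Icc zero_ne_one (heq t)
    (hlhs.continuous_deriv le_rfl) (hrhs.continuous_deriv le_rfl) hz
  rwa [deriv_const_mul_field, deriv_fun_sub (hiz.differentiable one_ne_zero z).fun_neg
    ((hvz.differentiable two_ne_zero z).const_mul G), deriv.fun_neg,
    deriv_const_mul_field] at h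

theorem transmission_line_admissible_pair_general (L C R G : ℝ) (i v : ℝ → ℝ → ℝ)
    (hG : 0 < G)
    (hi : ContDiff ℝ 2 (Function.uncurry i)) (hv : ContDiff ℝ 2 (Function.uncurry v))
    (heq1 : ∀ t : ℝ, ∀ z ∈ Set.Icc (0:ℝ) 1,
      L * deriv (i z) t = -(deriv (fun w => v w t) z) - R * i z t)
    (heq2 : ∀ t : ℝ, ∀ z ∈ Set.Icc (0:ℝ) 1,
      C * deriv (v z) t = -(deriv (fun w => i w t) z) - G * v z t) :
    ∀ t : ℝ, ∀ z ∈ Set.Icc (0:ℝ) 1,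
      (-L * deriv (i z) t + 2 * C / G * deriv (fun w => deriv (v w) t) z
        = R * i z t - deriv (fun w => v w t) z
          - 2 / G * deriv (fun w => deriv (fun w' => i w' t) w) z)
      ∧ (-C * deriv (v z) t = G * v z t + deriv (fun w => i w t) z) := by
  intro t z hz
  have hseries := heq1 t z hz
  have hshunt := heq2 t z hz
  have hshunt_z := telegrapher_shunt_equation_deriv_space hi hv heq2 t hz
  refine ⟨?_, by linarith⟩
  field_simp
  linear_combination (-G) * hseries + 2 * hshunt_z

/-- Solutions of the telegrapher's equations satisfy the
Brayton–Moser form with the admissible pair `Ã = [[−L, (2C/G)∂/∂z],[0, −C]]`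
and shaped potential `P̃`:
`−L·∂i/∂t + (2C/G)·∂²v/∂z∂t = R·i − ∂v/∂z − (2/G)·∂²i/∂z²` and
`−C·∂v/∂t = G·v + ∂i/∂z`. -/
theorem transmission_line_admissible_pair (L C R G : ℝ) (i v : ℝ → ℝ → ℝ)
    (hL : 0 < L) (hC : 0 < C) (hR : 0 < R) (hG : 0 < G)
    (hi : ContDiff ℝ 2 (Function.uncurry i)) (hv : ContDiff ℝ 2 (Function.uncurry v))
    (heq1 : ∀ t : ℝ, ∀ z ∈ Set.Icc (0:ℝ) 1,
      L * deriv (i z) t = -(deriv (fun w => v w t) z) - R * i z t)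
    (heq2 : ∀ t : ℝ, ∀ z ∈ Set.Icc (0:ℝ) 1,
      C * deriv (v z) t = -(deriv (fun w => i w t) z) - G * v z t) :
    ∀ t : ℝ, ∀ z ∈ Set.Icc (0:ℝ) 1,
      (-L * deriv (i z) t + 2 * C / G * deriv (fun w => deriv (v w) t) z
        = R * i z t - deriv (fun w => v w t) z
          - 2 / G * deriv (fun w => deriv (fun w' => i w' t) w) z)
      ∧ (-C * deriv (v z) t = G * v z t + deriv (fun w => i w t) z) :=
  transmission_line_admissible_pair_general L C R G i v hG hi hv heq1 heq2
end

section
/- Let i, v : [0,1] × ℝ → ℝ be smooth (at least C²) and satisfy the telegrapher's equations L·∂i/∂t = −∂v/∂z − R·i and C·∂v/∂t = −∂i/∂z − G·v on [0,1] × ℝ, with constants L, C, R, G > 0. Define P̃(t) = ∫₀¹ ( (R/2)·i² + (G/2)·v² + v·(∂i/∂z) + (1/G)·(∂i/∂z)² ) dz. Then for all t: dP̃/dt = ∫₀¹ ( −L·(∂i/∂t)² + (2C/G)·(∂i/∂t)·(∂²v/∂z∂t) − C·(∂v/∂t)² ) dz + [ (v + (2/G)·∂i/∂z)·(∂i/∂t)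 ] evaluated from z = 0 to z = 1. -/
/-!
Differentiation under the integral sign is legitimate because the integrand of `P̃` is jointly
`C¹`. At interior points the two equations, together with the `z`-derivative of the second one
and the symmetry `∂z∂t i = ∂t∂z i`, turn the `t`-derivative of that integrand into the
dissipation integrand plus the `z`-derivative of the flux `(v + (2/G) ∂i/∂z) ∂i/∂t`, which
integrates to the boundary term.
-/

open Function MeasureTheory Set Filter Topology

section PartialDeriv

variable {E : Type*} [NormedAddCommGroup E] [NormedSpace ℝ E] {u : ℝ → ℝ → E}

noncomputable def derivFst (u : ℝ → ℝ → E) (z t : ℝ) : E := deriv (fun w => u w t) z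

noncomputable def derivSnd (u : ℝ → ℝ → E) (z t : ℝ) : E := deriv (u z) t

theorem hasDerivAt_derivFst (hu : Differentiable ℝ (uncurry u)) (z t : ℝ) :
    HasDerivAt (fun w => u w t) (derivFst u z t) z :=
  (show DifferentiableAt ℝ (fun w => u w t) z from
    (hu (z, t)).comp (f := fun w => (w, t)) z (by fun_prop)).hasDerivAt

theorem hasDerivAt_derivSnd (hu : Differentiable ℝ (uncurry u)) (z t : ℝ) :
    HasDerivAt (u z) (derivSnd u z t) t :=
  (show DifferentiableAt ℝ (u z) t from
    (hu (z, t)).comp (f := fun τ => (z, τ)) t (by fun_prop)).hasDerivAt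

theorem uncurry_derivFst (hu : Differentiable ℝ (uncurry u)) :
    uncurry (derivFst u) = fun p => fderiv ℝ (uncurry u) p (1, 0) := by
  funext ⟨z, t⟩
  exact ((hu (z, t)).hasFDerivAt.comp_hasDerivAt z
    ((hasDerivAt_id z).prodMk (hasDerivAt_const z t))).deriv

theorem uncurry_derivSnd (hu : Differentiable ℝ (uncurry u)) :
    uncurry (derivSnd u) = fun p => fderiv ℝ (uncurry u) p (0, 1) := by
  funext ⟨z, t⟩
  exact ((hu (z, t)).hasFDerivAt.comp_hasDerivAt t
    ((hasDerivAt_const t z).prodMk (hasDerivAt_id t))).deriv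

theorem contDiff_uncurry_derivFst {m n : WithTop ℕ∞} (hu : ContDiff ℝ n (uncurry u))
    (hmn : m + 1 ≤ n) : ContDiff ℝ m (uncurry (derivFst u)) := by
  rw [uncurry_derivFst (hu.differentiable fun h => by simp [h] at hmn)]
  exact (hu.fderiv_right hmn).clm_apply contDiff_const

theorem contDiff_uncurry_derivSnd {m n : WithTop ℕ∞} (hu : ContDiff ℝ n (uncurry u))
    (hmn : m + 1 ≤ n) : ContDiff ℝ m (uncurry (derivSnd u)) := by
  rw [uncurry_derivSnd (hu.differentiable fun h => by simp [h] at hmn)]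
  exact (hu.fderiv_right hmn).clm_apply contDiff_const

theorem derivFst_derivSnd (hu : ContDiff ℝ 2 (uncurry u)) :
    derivFst (derivSnd u) = derivSnd (derivFst u) := by
  funext z t
  have hu' : Differentiable ℝ (fderiv ℝ (uncurry u)) :=
    (hu.fderiv_right (m := 1) le_rfl).differentiable one_ne_zero
  have happly (a b : ℝ × ℝ) : fderiv ℝ (fun p => fderiv ℝ (uncurry u) p a) (z, t) b
      = fderiv ℝ (fderiv ℝ (uncurry u)) (z, t) b a := by
    simp [fderiv_clm_apply (hu' (z, t)) (differentiableAt_const a)]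
  have h1 := contDiff_uncurry_derivSnd (m := 1) hu le_rfl
  have h2 := contDiff_uncurry_derivFst (m := 1) hu le_rfl
  change uncurry (derivFst (derivSnd u)) (z, t) = uncurry (derivSnd (derivFst u)) (z, t)
  rw [uncurry_derivFst (h1.differentiable one_ne_zero),
    uncurry_derivSnd (h2.differentiable one_ne_zero),
    uncurry_derivSnd (hu.differentiable two_ne_zero),
    uncurry_derivFst (hu.differentiable two_ne_zero)]
  dsimp only
  rw [happly, happly]
  exact (hu.contDiffAt.isSymmSndFDerivAt (by simp)) _ _

end PartialDeriv

section IntervalIntegral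

variable {E : Type*} [NormedAddCommGroup E] [NormedSpace ℝ E] {f : ℝ → ℝ → E}

theorem intervalIntegrable_derivFst (hf : ContDiff ℝ 1 (uncurry f)) (a b t : ℝ) :
    IntervalIntegrable (fun z => derivFst f z t) volume a b :=
  ((contDiff_uncurry_derivFst (m := 0) hf le_rfl).continuous.uncurry_right t).intervalIntegrable a b

theorem intervalIntegrable_derivSnd (hf : ContDiff ℝ 1 (uncurry f)) (a b t : ℝ) :
    IntervalIntegrable (fun z => derivSnd f z t) volume a b :=
  ((contDiff_uncurry_derivSnd (m := 0) hf le_rfl).continuous.uncurry_right t).intervalIntegrable a b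

theorem integral_derivFst_eq_sub [CompleteSpace E] (hf : ContDiff ℝ 1 (uncurry f)) (a b t : ℝ) :
    ∫ z in a..b, derivFst f z t = f b t - f a t :=
  intervalIntegral.integral_eq_sub_of_hasDerivAt
    (fun z _ => hasDerivAt_derivFst (hf.differentiable one_ne_zero) z t)
    (intervalIntegrable_derivFst hf a b t)

theorem hasDerivAt_intervalIntegral [CompleteSpace E] (hf : ContDiff ℝ 1 (uncurry f))
    (a b t : ℝ) :
    HasDerivAt (fun τ => ∫ z in a..b, f z τ) (∫ z in a..b, derivSnd f z t) t := by
  have hf' : Continuous (uncurry (derivSnd f)) :=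
    (contDiff_uncurry_derivSnd (m := 0) hf le_rfl).continuous
  obtain ⟨M, hM⟩ :=
    (isCompact_uIcc.prod (isCompact_closedBall t 1)).exists_bound_of_continuousOn hf'.continuousOn
  exact (intervalIntegral.hasDerivAt_integral_of_dominated_loc_of_deriv_le (bound := fun _ => M)
    (Metric.ball_mem_nhds t one_pos)
    (Eventually.of_forall fun τ => (hf.continuous.uncurry_right τ).aestronglyMeasurable)
    ((hf.continuous.uncurry_right t).intervalIntegrable a b)
    (hf'.uncurry_right t).aestronglyMeasurable
    (Eventually.of_forall fun z hz τ hτ =>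
      hM (z, τ) ⟨uIoc_subset_uIcc hz, Metric.ball_subset_closedBall hτ⟩)
    intervalIntegrable_const
    (Eventually.of_forall fun z _ τ _ =>
      hasDerivAt_derivSnd (hf.differentiable one_ne_zero) z τ)).2

end IntervalIntegral

namespace Telegrapher

variable {L C R G : ℝ} {i v : ℝ → ℝ → ℝ}

noncomputable def shapedDensity (R G : ℝ) (i v : ℝ → ℝ → ℝ) (z t : ℝ) : ℝ :=
  R / 2 * i z t ^ 2 + G / 2 * v z t ^ 2 + v z t * derivFst i z t + 1 / G * derivFst i z t ^ 2

noncomputable def shapedFlux (G : ℝ) (i v : ℝ → ℝ → ℝ) (z t : ℝ) : ℝ :=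
  (v z t + 2 / G * derivFst i z t) * derivSnd i z t

noncomputable def shapedDissipation (L C G : ℝ) (i v : ℝ → ℝ → ℝ) (z t : ℝ) : ℝ :=
  -L * derivSnd i z t ^ 2 + 2 * C / G * derivSnd i z t * derivFst (derivSnd v) z t
    - C * derivSnd v z t ^ 2

theorem contDiff_shapedDensity (R G : ℝ) (hi : ContDiff ℝ 2 (uncurry i))
    (hv : ContDiff ℝ 2 (uncurry v)) : ContDiff ℝ 1 (uncurry (shapedDensity R G i v)) := by
  have hi' : ContDiff ℝ 1 (uncurry i) := hi.of_le one_le_two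
  have hv' : ContDiff ℝ 1 (uncurry v) := hv.of_le one_le_two
  have hiz := contDiff_uncurry_derivFst (m := 1) hi le_rfl
  change ContDiff ℝ 1 fun p => R / 2 * uncurry i p ^ 2 + G / 2 * uncurry v p ^ 2
    + uncurry v p * uncurry (derivFst i) p + 1 / G * uncurry (derivFst i) p ^ 2
  fun_prop

theorem contDiff_shapedFlux (G : ℝ) (hi : ContDiff ℝ 2 (uncurry i))
    (hv : ContDiff ℝ 2 (uncurry v)) : ContDiff ℝ 1 (uncurry (shapedFlux G i v)) := by
  have hv' : ContDiff ℝ 1 (uncurry v) := hv.of_le one_le_two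
  have hiz := contDiff_uncurry_derivFst (m := 1) hi le_rfl
  have hit := contDiff_uncurry_derivSnd (m := 1) hi le_rfl
  change ContDiff ℝ 1 fun p =>
    (uncurry v p + 2 / G * uncurry (derivFst i) p) * uncurry (derivSnd i) p
  fun_prop

theorem derivSnd_shapedDensity (R G : ℝ) (hi : ContDiff ℝ 2 (uncurry i))
    (hv : ContDiff ℝ 2 (uncurry v)) (z t : ℝ) :
    derivSnd (shapedDensity R G i v) z t
      = R * i z t * derivSnd i z t + G * v z t * derivSnd v z t
        + derivSnd v z t * derivFst i z t + v z t * derivSnd (derivFst i) z t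
        + 2 / G * derivFst i z t * derivSnd (derivFst i) z t := by
  have hit := hasDerivAt_derivSnd (hi.differentiable two_ne_zero) z t
  have hvt := hasDerivAt_derivSnd (hv.differentiable two_ne_zero) z t
  have hizt := hasDerivAt_derivSnd
    ((contDiff_uncurry_derivFst (m := 1) hi le_rfl).differentiable one_ne_zero) z t
  refine (((((hit.pow 2).const_mul (R / 2)).add ((hvt.pow 2).const_mul (G / 2))).add
    (hvt.mul hizt)).add ((hizt.pow 2).const_mul (1 / G))).deriv.trans ?_
  ring

theorem derivFst_shapedFlux (G : ℝ) (hi : ContDiff ℝ 2 (uncurry i))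
    (hv : ContDiff ℝ 2 (uncurry v)) (z t : ℝ) :
    derivFst (shapedFlux G i v) z t
      = (derivFst v z t + 2 / G * derivFst (derivFst i) z t) * derivSnd i z t
        + (v z t + 2 / G * derivFst i z t) * derivFst (derivSnd i) z t :=
  (((hasDerivAt_derivFst (hv.differentiable two_ne_zero) z t).add
    ((hasDerivAt_derivFst ((contDiff_uncurry_derivFst (m := 1) hi le_rfl).differentiable
      one_ne_zero) z t).const_mul (2 / G))).mul
    (hasDerivAt_derivFst ((contDiff_uncurry_derivSnd (m := 1) hi le_rfl).differentiable
      one_ne_zero) z t)).deriv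

section Balance

variable (hG : G ≠ 0) (hi : ContDiff ℝ 2 (uncurry i)) (hv : ContDiff ℝ 2 (uncurry v))
  (heq1 : ∀ t : ℝ, ∀ z ∈ Icc (0 : ℝ) 1, L * derivSnd i z t = -derivFst v z t - R * i z t)
  (heq2 : ∀ t : ℝ, ∀ z ∈ Icc (0 : ℝ) 1, C * derivSnd v z t = -derivFst i z t - G * v z t)
include hG hi hv heq1 heq2

theorem shapedDissipation_eq {z : ℝ} (hz : z ∈ Ioo (0 : ℝ) 1) (t : ℝ) :
    shapedDissipation L C G i v z t
      = derivSnd (shapedDensity R G i v) z t - derivFst (shapedFlux G i v) z t := by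
  have hv₁ := hv.differentiable two_ne_zero
  have hiz₁ := (contDiff_uncurry_derivFst (m := 1) hi le_rfl).differentiable one_ne_zero
  have hvt₁ := (contDiff_uncurry_derivSnd (m := 1) hv le_rfl).differentiable one_ne_zero
  -- `z` is interior, so the second equation holds near `z` and can be differentiated in `z`
  have heq2_z : C * derivFst (derivSnd v) z t
      = -derivFst (derivFst i) z t - G * derivFst v z t := by
    have hloc : (fun w => C * derivSnd v w t) =ᶠ[𝓝 z] fun w => -derivFst i w t - G * v w t :=
      eventually_of_mem (Icc_mem_nhds hz.1 hz.2) fun w hw => heq2 t w hw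
    rw [← ((hasDerivAt_derivFst hvt₁ z t).const_mul C).deriv, hloc.deriv_eq]
    exact ((hasDerivAt_derivFst hiz₁ z t).neg.sub
      ((hasDerivAt_derivFst hv₁ z t).const_mul G)).deriv
  rw [derivSnd_shapedDensity R G hi hv, derivFst_shapedFlux G hi hv, derivFst_derivSnd hi,
    shapedDissipation]
  field_simp
  linear_combination -G * derivSnd i z t * heq1 t z (Ioo_subset_Icc_self hz)
    - G * derivSnd v z t * heq2 t z (Ioo_subset_Icc_self hz) + 2 * derivSnd i z t * heq2_z

theorem hasDerivAt_integral_shapedDensity (t : ℝ) :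
    HasDerivAt (fun τ => ∫ z in (0 : ℝ)..1, shapedDensity R G i v z τ)
      ((∫ z in (0 : ℝ)..1, shapedDissipation L C G i v z t)
        + (shapedFlux G i v 1 t - shapedFlux G i v 0 t)) t := by
  have hD := contDiff_shapedDensity R G hi hv
  have hF := contDiff_shapedFlux G hi hv
  rw [intervalIntegral.integral_congr_Ioo_of_le zero_le_one
      fun z hz => shapedDissipation_eq hG hi hv heq1 heq2 hz t,
    intervalIntegral.integral_sub (intervalIntegrable_derivSnd hD 0 1 t)
      (intervalIntegrable_derivFst hF 0 1 t),
    integral_derivFst_eq_sub hF, sub_add_cancel]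
  exact hasDerivAt_intervalIntegral hD 0 1 t

end Balance

end Telegrapher

open Telegrapher

theorem shaped_potential_rate_general (L C R G : ℝ) (i v : ℝ → ℝ → ℝ)
    (hG : 0 < G)
    (hi : ContDiff ℝ 2 (Function.uncurry i)) (hv : ContDiff ℝ 2 (Function.uncurry v))
    (heq1 : ∀ t : ℝ, ∀ z ∈ Set.Icc (0:ℝ) 1,
      L * deriv (i z) t = -(deriv (fun w => v w t) z) - R * i z t)
    (heq2 : ∀ t : ℝ, ∀ z ∈ Set.Icc (0:ℝ) 1,
      C * deriv (v z) t = -(deriv (fun w => i w t) z) - G * v z t) :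
    ∀ t : ℝ,
      deriv (fun τ => ∫ z in (0:ℝ)..1,
          (R / 2 * (i z τ) ^ 2 + G / 2 * (v z τ) ^ 2
            + v z τ * deriv (fun w => i w τ) z
            + 1 / G * (deriv (fun w => i w τ) z) ^ 2)) t
        = (∫ z in (0:ℝ)..1,
            (-L * (deriv (i z) t) ^ 2
              + 2 * C / G * deriv (i z) t * deriv (fun w => deriv (v w) t) z
              - C * (deriv (v z) t) ^ 2))
          + ((v 1 t + 2 / G * deriv (fun w => i w t) 1) * deriv (i 1) t
            - (v 0 t + 2 / G * deriv (fun w => i w t) 0) * deriv (i 0) t) := fun t =>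
  (hasDerivAt_integral_shapedDensity hG.ne' hi hv heq1 heq2 t).deriv

/-- For the telegrapher's equations, the shaped potential
`P̃(t) = ∫₀¹ ((R/2)i² + (G/2)v² + v·∂i/∂z + (1/G)(∂i/∂z)²) dz` satisfies
`dP̃/dt = ∫₀¹ (−L(∂i/∂t)² + (2C/G)(∂i/∂t)(∂²v/∂z∂t) − C(∂v/∂t)²) dz
  + [(v + (2/G)∂i/∂z)·(∂i/∂t)]₀¹`. -/
theorem shaped_potential_rate (L C R G : ℝ) (i v : ℝ → ℝ → ℝ)
    (hL : 0 < L) (hC : 0 < C) (hR : 0 < R) (hG : 0 < G)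
    (hi : ContDiff ℝ 2 (Function.uncurry i)) (hv : ContDiff ℝ 2 (Function.uncurry v))
    (heq1 : ∀ t : ℝ, ∀ z ∈ Set.Icc (0:ℝ) 1,
      L * deriv (i z) t = -(deriv (fun w => v w t) z) - R * i z t)
    (heq2 : ∀ t : ℝ, ∀ z ∈ Set.Icc (0:ℝ) 1,
      C * deriv (v z) t = -(deriv (fun w => i w t) z) - G * v z t) :
    ∀ t : ℝ,
      deriv (fun τ => ∫ z in (0:ℝ)..1,
          (R / 2 * (i z τ) ^ 2 + G / 2 * (v z τ) ^ 2
            + v z τ * deriv (fun w => i w τ) z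
            + 1 / G * (deriv (fun w => i w τ) z) ^ 2)) t
        = (∫ z in (0:ℝ)..1,
            (-L * (deriv (i z) t) ^ 2
              + 2 * C / G * deriv (i z) t * deriv (fun w => deriv (v w) t) z
              - C * (deriv (v z) t) ^ 2))
          + ((v 1 t + 2 / G * deriv (fun w => i w t) 1) * deriv (i 1) t
            - (v 0 t + 2 / G * deriv (fun w => i w t) 0) * deriv (i 0) t) :=
  shaped_potential_rate_general L C R G i v hG hi hv heq1 heq2
end

section
/- Let G, R, K > 0, let i* : [0,1] → ℝ be continuously differentiable and v* : [0,1] → ℝ continuous with G·v*(z) + (i*)′(z) = 0 for all z ∈ [0,1]. For i ∈ C¹([0,1]) and v ∈ C⁰([0,1]) define P_d(i,v) = (1/(2G))·∫₀¹ [ (G·v + i′)² + G·(K + R)·(i − i*)² + (G·v* + i′)² ] dz. Then P_d(i,v) ≥ 0 for all (i,v), and P_d(i,v) = 0 if and only if i = i* and v = v* on [0,1]; i.e., P_d has a strict global minimum at the desired equilibrium profile (i*, v*). -/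
/-!
The integrand is a sum of squares with positive weights and is continuous, so the potential is
nonnegative and vanishes exactly when the integrand vanishes on `[0,1]`. Pointwise vanishing
forces `i = i*` and `v = v*`; conversely, `i = i*` on `[0,1]` forces `i' = (i*)'` there, and the
equilibrium relation `G v* + (i*)' = 0` then kills the last square.
-/

open Set MeasureTheory

/-- The endpoints are reached by continuity of the derivatives, `Icc a b` being the closure of
its interior. -/
theorem eqOn_deriv_Icc_of_eqOn_Icc {E : Type*} [NormedAddCommGroup E] [NormedSpace ℝ E]
    {f g : ℝ → E} {a b : ℝ} (hab : a ≠ b) (hf : ContinuousOn (deriv f) (Icc a b))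
    (hg : ContinuousOn (deriv g) (Icc a b)) (h : EqOn f g (Icc a b)) :
    EqOn (deriv f) (deriv g) (Icc a b) := by
  have h_interior : EqOn (deriv f) (deriv g) (interior (Icc a b)) := fun x hx =>
    (Filter.eventuallyEq_of_mem (mem_interior_iff_mem_nhds.mp hx) h).deriv_eq
  exact h_interior.of_subset_closure hf hg interior_subset (closure_interior_Icc hab).ge

theorem intervalIntegral.integral_eq_zero_iff_forall_mem_Icc {f : ℝ → ℝ} {a b : ℝ}
    (hab : a < b) (hf : ContinuousOn f (Icc a b)) (hf_nonneg : ∀ x ∈ Icc a b, 0 ≤ f x) :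
    ∫ x in a..b, f x = 0 ↔ ∀ x ∈ Icc a b, f x = 0 := by
  rw [integral_eq_zero_iff_of_le_of_nonneg_ae hab.le
      (ae_restrict_of_forall_mem measurableSet_Ioc fun x hx => hf_nonneg x (Ioc_subset_Icc_self hx))
      (hf.intervalIntegrable_of_Icc hab.le),
    Measure.restrict_congr_set Ioc_ae_eq_Icc]
  refine ⟨fun h x hx => Measure.eqOn_Icc_of_ae_eq volume hab.ne h hf continuousOn_const hx,
    fun h => ae_restrict_of_forall_mem measurableSet_Icc h⟩

theorem sq_add_mul_sq_add_sq_eq_zero_iff {G c x y d e : ℝ} (hG : G ≠ 0) (hc : 0 < c) :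
    (G * x + d) ^ 2 + c * e ^ 2 + (G * y + d) ^ 2 = 0 ↔ e = 0 ∧ x = y ∧ G * y + d = 0 := by
  constructor
  · intro h
    obtain ⟨hxe, hy⟩ := (add_eq_zero_iff_of_nonneg (by positivity) (by positivity)).mp h
    obtain ⟨hx, he⟩ := (add_eq_zero_iff_of_nonneg (by positivity) (by positivity)).mp hxe
    rw [sq_eq_zero_iff] at hx hy
    exact ⟨by simpa [hc.ne'] using he, mul_left_cancel₀ hG (by linarith), hy⟩
  · rintro ⟨rfl, rfl, hy⟩
    rw [hy]
    ring

/-- The closed-loop shaped potential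
`P_d(i,v) = (1/(2G))∫₀¹ [(G·v + i′)² + G(K+R)(i − i*)² + (G·v* + i′)²] dz`,
with target profiles satisfying `G·v* + (i*)′ = 0` on `[0,1]`, is nonnegative
and vanishes iff `i = i*` and `v = v*` on `[0,1]`. -/
theorem closed_loop_potential_min (G R K : ℝ) (hG : 0 < G) (hR : 0 < R) (hK : 0 < K)
    (istar vstar : ℝ → ℝ) (histar : ContDiff ℝ 1 istar) (hvstar : Continuous vstar)
    (heq : ∀ z ∈ Set.Icc (0:ℝ) 1, G * vstar z + deriv istar z = 0) :
    ∀ (i v : ℝ → ℝ), ContDiff ℝ 1 i → Continuous v →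
      (0 ≤ 1 / (2 * G) * ∫ z in (0:ℝ)..1,
          ((G * v z + deriv i z) ^ 2 + G * (K + R) * (i z - istar z) ^ 2
            + (G * vstar z + deriv i z) ^ 2))
      ∧ ((1 / (2 * G) * ∫ z in (0:ℝ)..1,
          ((G * v z + deriv i z) ^ 2 + G * (K + R) * (i z - istar z) ^ 2
            + (G * vstar z + deriv i z) ^ 2)) = 0
          ↔ ∀ z ∈ Set.Icc (0:ℝ) 1, i z = istar z ∧ v z = vstar z) := by
  intro i v hi hv
  have hi_deriv := hi.continuous_deriv le_rfl
  have histar_deriv := histar.continuous_deriv le_rfl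
  have hi_cont := hi.continuous
  have histar_cont := histar.continuous
  set f : ℝ → ℝ := fun z => (G * v z + deriv i z) ^ 2 + G * (K + R) * (i z - istar z) ^ 2
      + (G * vstar z + deriv i z) ^ 2
  have hf_cont : Continuous f := by fun_prop
  have hf_nonneg : ∀ z, 0 ≤ f z := fun z => by positivity
  have h_integral : ∫ z in (0:ℝ)..1, f z = 0 ↔
      ∀ z ∈ Icc (0:ℝ) 1, i z = istar z ∧ v z = vstar z := by
    rw [intervalIntegral.integral_eq_zero_iff_forall_mem_Icc one_pos hf_cont.continuousOn
      fun z _ => hf_nonneg z]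
    simp only [f, sq_add_mul_sq_add_sq_eq_zero_iff hG.ne' (by positivity : 0 < G * (K + R)),
      sub_eq_zero]
    refine ⟨fun h z hz => ⟨(h z hz).1, (h z hz).2.1⟩,
      fun h z hz => ⟨(h z hz).1, (h z hz).2, ?_⟩⟩
    have h_deriv := eqOn_deriv_Icc_of_eqOn_Icc zero_ne_one hi_deriv.continuousOn
      histar_deriv.continuousOn fun y hy => (h y hy).1
    rw [h_deriv hz]
    exact heq z hz
  refine ⟨mul_nonneg (by positivity) (intervalIntegral.integral_nonneg zero_le_one
    fun z _ => hf_nonneg z), ?_⟩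
  rw [mul_eq_zero, or_iff_right (by positivity), h_integral]
end

section
/- Let i, v : [0,1] × ℝ → ℝ be three times continuously differentiable and satisfy the telegrapher's equations L·∂i/∂t = −∂v/∂z − R·i and C·∂v/∂t = −∂i/∂z − G·v on [0,1] × ℝ, with constants L, C, R, G > 0. Define P₂(t) = (1/2)·∫₀¹ ( L·(∂i/∂t)² + C·(∂v/∂t)² ) dz. Then for all t: dP₂/dt = −∫₀¹ ( R·(∂i/∂t)² + G·(∂v/∂t)² ) dz − [ (∂v/∂t)·(∂i/∂t) ] evaluated from z = 0 to z = 1. -/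
/-!
Differentiating under the integral sign (legitimate because `∂ₜ` of the integrand is continuous,
hence bounded on compacts) reduces the claim to a pointwise energy balance. Differentiating the
telegrapher equations in `t` and using the symmetry of mixed partials `∂ₜ∂_z = ∂_z∂ₜ` gives
`∂ₜ(L (∂ₜi)² + C (∂ₜv)²) = -2 (R (∂ₜi)² + G (∂ₜv)²) - 2 ∂_z(∂ₜv ∂ₜi)`,
and the flux term integrates to the boundary values by the fundamental theorem of calculus.
-/

open Function Set

section PartialDerivatives

variable {E : Type*} [NormedAddCommGroup E] [NormedSpace ℝ E] {f : ℝ → ℝ → E}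

theorem hasDerivAt_snd_of_differentiable (hf : Differentiable ℝ (uncurry f)) (z t : ℝ) :
    HasDerivAt (f z) (fderiv ℝ (uncurry f) (z, t) (0, 1)) t :=
  (hf (z, t)).hasFDerivAt.comp_hasDerivAt t ((hasDerivAt_const t z).prodMk (hasDerivAt_id t))

theorem hasDerivAt_fst_of_differentiable (hf : Differentiable ℝ (uncurry f)) (z t : ℝ) :
    HasDerivAt (fun w => f w t) (fderiv ℝ (uncurry f) (z, t) (1, 0)) z :=
  (hf (z, t)).hasFDerivAt.comp_hasDerivAt (f := fun w => (w, t)) z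
    ((hasDerivAt_id z).prodMk (hasDerivAt_const z t))

theorem uncurry_deriv_snd (hf : Differentiable ℝ (uncurry f)) :
    (uncurry fun z t => deriv (f z) t) = fun p => fderiv ℝ (uncurry f) p (0, 1) := by
  ext ⟨z, t⟩
  exact (hasDerivAt_snd_of_differentiable hf z t).deriv

theorem uncurry_deriv_fst (hf : Differentiable ℝ (uncurry f)) :
    (uncurry fun z t => deriv (fun w => f w t) z) = fun p => fderiv ℝ (uncurry f) p (1, 0) := by
  ext ⟨z, t⟩
  exact (hasDerivAt_fst_of_differentiable hf z t).deriv

theorem contDiff_uncurry_deriv_snd {n : WithTop ℕ∞} (hf : ContDiff ℝ (n + 1) (uncurry f)) :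
    ContDiff ℝ n (uncurry fun z t => deriv (f z) t) := by
  rw [uncurry_deriv_snd (hf.differentiable (by simp))]
  exact (hf.fderiv_right le_rfl).clm_apply contDiff_const

theorem contDiff_uncurry_deriv_fst {n : WithTop ℕ∞} (hf : ContDiff ℝ (n + 1) (uncurry f)) :
    ContDiff ℝ n (uncurry fun z t => deriv (fun w => f w t) z) := by
  rw [uncurry_deriv_fst (hf.differentiable (by simp))]
  exact (hf.fderiv_right le_rfl).clm_apply contDiff_const

theorem hasDerivAt_deriv_snd (hf : Differentiable ℝ (uncurry f)) (z t : ℝ) :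
    HasDerivAt (f z) (deriv (f z) t) t :=
  (hasDerivAt_snd_of_differentiable hf z t).differentiableAt.hasDerivAt

theorem hasDerivAt_deriv_fst (hf : Differentiable ℝ (uncurry f)) (z t : ℝ) :
    HasDerivAt (fun w => f w t) (deriv (fun w => f w t) z) z :=
  (hasDerivAt_fst_of_differentiable hf z t).differentiableAt.hasDerivAt

theorem hasDerivAt_deriv_fst_snd_comm (hf : ContDiff ℝ 2 (uncurry f)) (z t : ℝ) :
    HasDerivAt (fun τ => deriv (fun w => f w τ) z) (deriv (fun w => deriv (f w) t) z) t := by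
  have hd : Differentiable ℝ (uncurry f) := hf.differentiable (by simp)
  have hdd : Differentiable ℝ (fderiv ℝ (uncurry f)) :=
    (hf.fderiv_right (m := 1) (by norm_num)).differentiable one_ne_zero
  have hfst : ContDiff ℝ 1 (uncurry fun z t => deriv (fun w => f w t) z) :=
    contDiff_uncurry_deriv_fst hf
  have hsnd : ContDiff ℝ 1 (uncurry fun z t => deriv (f z) t) := contDiff_uncurry_deriv_snd hf
  have hsymm := (hf.contDiffAt (x := (z, t))).isSymmSndFDerivAt (by simp) (0, 1) (1, 0)
  have hswap : ∀ u w : ℝ × ℝ, fderiv ℝ (fun p => fderiv ℝ (uncurry f) p u) (z, t) w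
      = fderiv ℝ (fderiv ℝ (uncurry f)) (z, t) w u := fun u w => by
    rw [fderiv_clm_apply (hdd _) (differentiableAt_const _)]
    simp
  convert hasDerivAt_snd_of_differentiable (hfst.differentiable one_ne_zero) z t using 1
  have hmixed := (hasDerivAt_fst_of_differentiable (hsnd.differentiable one_ne_zero) z t).deriv
  beta_reduce at hmixed
  rw [hmixed, uncurry_deriv_fst hd, uncurry_deriv_snd hd, hswap, hswap, hsymm]

theorem intervalIntegrable_deriv_fst (hf : ContDiff ℝ 1 (uncurry f)) (a b t : ℝ) :
    IntervalIntegrable (fun z => deriv (fun w => f w t) z) MeasureTheory.volume a b :=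
  ((contDiff_uncurry_deriv_fst (n := 0) hf).continuous.uncurry_right t).intervalIntegrable a b

theorem integral_deriv_fst_eq_sub [CompleteSpace E] (hf : ContDiff ℝ 1 (uncurry f)) (a b t : ℝ) :
    ∫ z in a..b, deriv (fun w => f w t) z = f b t - f a t :=
  intervalIntegral.integral_deriv_eq_sub
    (fun z _ =>
      (hasDerivAt_fst_of_differentiable (hf.differentiable one_ne_zero) z t).differentiableAt)
    (intervalIntegrable_deriv_fst hf a b t)

theorem hasDerivAt_intervalIntegral_of_contDiff (hf : ContDiff ℝ 1 (uncurry f)) (a b t : ℝ) :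
    HasDerivAt (fun τ => ∫ z in a..b, f z τ) (∫ z in a..b, deriv (f z) t) t := by
  have hft : Continuous (uncurry fun z t => deriv (f z) t) :=
    (contDiff_uncurry_deriv_snd (n := 0) hf).continuous
  obtain ⟨M, hM⟩ := (isCompact_uIcc.prod (isCompact_closedBall t 1)).exists_bound_of_continuousOn
    hft.continuousOn
  refine (intervalIntegral.hasDerivAt_integral_of_dominated_loc_of_deriv_le
    (F := fun τ z => f z τ) (F' := fun τ z => deriv (f z) τ) (bound := fun _ => M)
    (Metric.closedBall_mem_nhds t one_pos)
    (.of_forall fun τ => (hf.continuous.uncurry_right τ).aestronglyMeasurable)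
    ((hf.continuous.uncurry_right t).intervalIntegrable a b)
    (hft.uncurry_right t).aestronglyMeasurable
    (.of_forall fun z hz τ hτ => hM (z, τ) ⟨uIoc_subset_uIcc hz, hτ⟩)
    intervalIntegrable_const
    (.of_forall fun z _ τ _ => hasDerivAt_deriv_snd (hf.differentiable one_ne_zero) z τ)).2

end PartialDerivatives

section Telegrapher

variable {i v : ℝ → ℝ → ℝ} {z : ℝ}

theorem mul_deriv_deriv_of_telegrapher {a b : ℝ} {f g : ℝ → ℝ → ℝ}
    (hf : ContDiff ℝ 2 (uncurry f)) (hg : ContDiff ℝ 2 (uncurry g))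
    (h : ∀ τ, a * deriv (f z) τ = -deriv (fun w => g w τ) z - b * f z τ) (t : ℝ) :
    a * deriv (deriv (f z)) t = -deriv (fun w => deriv (g w) t) z - b * deriv (f z) t := by
  have hft : Differentiable ℝ (uncurry fun z t => deriv (f z) t) :=
    (contDiff_uncurry_deriv_snd hf).differentiable one_ne_zero
  have hrhs : HasDerivAt (fun τ => -deriv (fun w => g w τ) z - b * f z τ)
      (-deriv (fun w => deriv (g w) t) z - b * deriv (f z) t) t :=
    (hasDerivAt_deriv_fst_snd_comm hg z t).neg.sub
      ((hasDerivAt_deriv_snd (hf.differentiable two_ne_zero) z t).const_mul b)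
  rw [← funext h] at hrhs
  exact ((hasDerivAt_deriv_snd hft z t).const_mul a).unique hrhs

theorem deriv_energy_density_of_telegrapher {L C R G t : ℝ}
    (hi : ContDiff ℝ 2 (uncurry i)) (hv : ContDiff ℝ 2 (uncurry v))
    (heq1 : ∀ τ, L * deriv (i z) τ = -deriv (fun w => v w τ) z - R * i z τ)
    (heq2 : ∀ τ, C * deriv (v z) τ = -deriv (fun w => i w τ) z - G * v z τ) :
    deriv (fun τ => L * deriv (i z) τ ^ 2 + C * deriv (v z) τ ^ 2) t
      = -2 * (R * deriv (i z) t ^ 2 + G * deriv (v z) t ^ 2)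
        - 2 * deriv (fun w => deriv (v w) t * deriv (i w) t) z := by
  have hit : Differentiable ℝ (uncurry fun z t => deriv (i z) t) :=
    (contDiff_uncurry_deriv_snd hi).differentiable one_ne_zero
  have hvt : Differentiable ℝ (uncurry fun z t => deriv (v z) t) :=
    (contDiff_uncurry_deriv_snd hv).differentiable one_ne_zero
  have hdensity : HasDerivAt (fun τ => L * deriv (i z) τ ^ 2 + C * deriv (v z) τ ^ 2)
      (L * (2 * deriv (i z) t ^ 1 * deriv (deriv (i z)) t)
        + C * (2 * deriv (v z) t ^ 1 * deriv (deriv (v z)) t)) t :=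
    (((hasDerivAt_deriv_snd hit z t).pow 2).const_mul L).add
      (((hasDerivAt_deriv_snd hvt z t).pow 2).const_mul C)
  have hflux : HasDerivAt (fun w => deriv (v w) t * deriv (i w) t)
      (deriv (fun w => deriv (v w) t) z * deriv (i z) t
        + deriv (v z) t * deriv (fun w => deriv (i w) t) z) z :=
    (hasDerivAt_deriv_fst hvt z t).mul (hasDerivAt_deriv_fst hit z t)
  rw [hdensity.deriv, hflux.deriv]
  linear_combination 2 * deriv (i z) t * mul_deriv_deriv_of_telegrapher hi hv heq1 t
    + 2 * deriv (v z) t * mul_deriv_deriv_of_telegrapher hv hi heq2 t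

end Telegrapher

theorem P2_rate_general (L C R G : ℝ) (i v : ℝ → ℝ → ℝ)
    (hi : ContDiff ℝ 3 (Function.uncurry i)) (hv : ContDiff ℝ 3 (Function.uncurry v))
    (heq1 : ∀ t : ℝ, ∀ z ∈ Set.Icc (0:ℝ) 1,
      L * deriv (i z) t = -(deriv (fun w => v w t) z) - R * i z t)
    (heq2 : ∀ t : ℝ, ∀ z ∈ Set.Icc (0:ℝ) 1,
      C * deriv (v z) t = -(deriv (fun w => i w t) z) - G * v z t) :
    ∀ t : ℝ,
      deriv (fun τ => 1 / 2 * ∫ z in (0:ℝ)..1,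
          (L * (deriv (i z) τ) ^ 2 + C * (deriv (v z) τ) ^ 2)) t
        = -(∫ z in (0:ℝ)..1,
              (R * (deriv (i z) t) ^ 2 + G * (deriv (v z) t) ^ 2))
          - (deriv (v 1) t * deriv (i 1) t - deriv (v 0) t * deriv (i 0) t) := by
  intro t
  have hi2 : ContDiff ℝ 2 (uncurry i) := hi.of_le (by norm_num)
  have hv2 : ContDiff ℝ 2 (uncurry v) := hv.of_le (by norm_num)
  have hit : ContDiff ℝ 1 (uncurry fun z t => deriv (i z) t) := contDiff_uncurry_deriv_snd hi2
  have hvt : ContDiff ℝ 1 (uncurry fun z t => deriv (v z) t) := contDiff_uncurry_deriv_snd hv2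
  have hdensity : ContDiff ℝ 1
      (uncurry fun z τ => L * deriv (i z) τ ^ 2 + C * deriv (v z) τ ^ 2) :=
    (contDiff_const.mul (hit.pow 2)).add (contDiff_const.mul (hvt.pow 2))
  have hflux : ContDiff ℝ 1 (uncurry fun z τ => deriv (v z) τ * deriv (i z) τ) := hvt.mul hit
  have hdissipation : IntervalIntegrable
      (fun z => R * deriv (i z) t ^ 2 + G * deriv (v z) t ^ 2) MeasureTheory.volume 0 1 := by
    have hit_cont := hit.continuous.uncurry_right t
    have hvt_cont := hvt.continuous.uncurry_right t
    exact Continuous.intervalIntegrable (by fun_prop) 0 1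
  have hbalance : ∀ z ∈ uIcc (0:ℝ) 1,
      deriv (fun τ => L * deriv (i z) τ ^ 2 + C * deriv (v z) τ ^ 2) t
        = -2 * (R * deriv (i z) t ^ 2 + G * deriv (v z) t ^ 2)
          - 2 * deriv (fun w => deriv (v w) t * deriv (i w) t) z := fun z hz => by
    rw [uIcc_of_le zero_le_one] at hz
    exact deriv_energy_density_of_telegrapher hi2 hv2 (heq1 · z hz) (heq2 · z hz)
  rw [((hasDerivAt_intervalIntegral_of_contDiff hdensity 0 1 t).const_mul (1 / 2)).deriv,
    intervalIntegral.integral_congr hbalance,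
    intervalIntegral.integral_sub (hdissipation.const_mul (-2))
      ((intervalIntegrable_deriv_fst hflux 0 1 t).const_mul 2),
    intervalIntegral.integral_const_mul, intervalIntegral.integral_const_mul,
    integral_deriv_fst_eq_sub hflux]
  ring

/-- For the telegrapher's equations, the functional
`P₂(t) = (1/2)∫₀¹ (L(∂i/∂t)² + C(∂v/∂t)²) dz` satisfies
`dP₂/dt = −∫₀¹ (R(∂i/∂t)² + G(∂v/∂t)²) dz − [(∂v/∂t)(∂i/∂t)]₀¹`. -/
theorem P2_rate (L C R G : ℝ) (i v : ℝ → ℝ → ℝ)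
    (hL : 0 < L) (hC : 0 < C) (hR : 0 < R) (hG : 0 < G)
    (hi : ContDiff ℝ 3 (Function.uncurry i)) (hv : ContDiff ℝ 3 (Function.uncurry v))
    (heq1 : ∀ t : ℝ, ∀ z ∈ Set.Icc (0:ℝ) 1,
      L * deriv (i z) t = -(deriv (fun w => v w t) z) - R * i z t)
    (heq2 : ∀ t : ℝ, ∀ z ∈ Set.Icc (0:ℝ) 1,
      C * deriv (v z) t = -(deriv (fun w => i w t) z) - G * v z t) :
    ∀ t : ℝ,
      deriv (fun τ => 1 / 2 * ∫ z in (0:ℝ)..1,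
          (L * (deriv (i z) τ) ^ 2 + C * (deriv (v z) τ) ^ 2)) t
        = -(∫ z in (0:ℝ)..1,
              (R * (deriv (i z) t) ^ 2 + G * (deriv (v z) t) ^ 2))
          - (deriv (v 1) t * deriv (i 1) t - deriv (v 0) t * deriv (i 0) t) :=
  P2_rate_general L C R G i v hi hv heq1 heq2
end
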